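/- Let a = diag(i a_1, …, i a_n) and b = diag(i b_1, …, i b_n) with a_1, …, a_n distinct real numbers and b_1, …, b_n real, and define T on matrices with zero diagonal by (T(u))_{jk} = ((b_j − b_k)/(a_j − a_k)) u_{jk} for j ≠ k and (T(u))_{jj} = 0. Let u : ℝ² → u(n) be a smooth map taking values in the skew-Hermitian matrices with zero diagonal. Then u satisfies the n-wave equation u_t = T(u_x) + [u, T(u)] if and only if for every λ ∈ ℂ the connection 1-form (a λ + u) dx + (b λ + T(u)) dt is flat, i.e. ∂_t(aλ + u) − ∂_x(bλ + T(u)) = [aλ + u, bλ + T(u)]. -/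

import Mathlib

open Matrix
open scoped ContDiff

attribute [local instance] Matrix.frobeniusNormedAddCommGroup Matrix.frobeniusNormedSpace

/-- Let `a = diag(i a₁, …, i aₙ)`, `b = diag(i b₁, …, i bₙ)` with `a₁, …, aₙ` distinct
reals, and `T` the map `(T u)_{jk} = ((b_j − b_k)/(a_j − a_k)) u_{jk}` (`j ≠ k`),
`(T u)_{jj} = 0`.  A smooth map `u : ℝ² → u(n)` with values in the skew-Hermitian
matrices with zero diagonal satisfies the `n`-wave equation `u_t = T(u_x) + [u, T(u)]`
iff for every `λ ∈ ℂ` the 1-form `(aλ + u) dx + (bλ + T(u)) dt` is flat. -/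
theorem stmt_12 (n : ℕ) (av bv : Fin n → ℝ) (hav : Function.Injective av)
    (a b : Matrix (Fin n) (Fin n) ℂ)
    (ha : a = Matrix.diagonal fun j => Complex.I * (av j : ℂ))
    (hb : b = Matrix.diagonal fun j => Complex.I * (bv j : ℂ))
    (T : Matrix (Fin n) (Fin n) ℂ → Matrix (Fin n) (Fin n) ℂ)
    (hT : ∀ v : Matrix (Fin n) (Fin n) ℂ, T v
      = Matrix.of fun j k =>
          if j = k then 0 else (((bv j - bv k) / (av j - av k) : ℝ) : ℂ) * v j k)
    (u : ℝ → ℝ → Matrix (Fin n) (Fin n) ℂ)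
    (hu : ContDiff ℝ ∞ (Function.uncurry u))
    (hu_skew : ∀ x t : ℝ, star (u x t) = -(u x t))
    (hu_diag : ∀ x t : ℝ, ∀ j : Fin n, u x t j j = 0) :
    (∀ x t : ℝ,
        deriv (fun s => u x s) t
          = T (deriv (fun s => u s t) x)
            + (u x t * T (u x t) - T (u x t) * u x t))
      ↔ (∀ (lam : ℂ) (x t : ℝ),
          deriv (fun s => lam • a + u x s) t - deriv (fun s => lam • b + T (u s t)) x
            = (lam • a + u x t) * (lam • b + T (u x t))
              - (lam • b + T (u x t)) * (lam • a + u x t)) := by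
  -- T is ℝ-linear
  have hTadd : ∀ v w, T (v + w) = T v + T w := by
    intro v w
    ext j k
    by_cases h : j = k <;> simp [hT, h, mul_add]
  have hTsmul : ∀ (r : ℝ) (v), T (r • v) = r • T v := by
    intro r v
    ext j k
    by_cases h : j = k <;> simp [hT, h, Matrix.smul_apply] <;> ring
  let Tl : Matrix (Fin n) (Fin n) ℂ →ₗ[ℝ] Matrix (Fin n) (Fin n) ℂ :=
    { toFun := T, map_add' := hTadd, map_smul' := hTsmul }
  let Tc : Matrix (Fin n) (Fin n) ℂ →L[ℝ] Matrix (Fin n) (Fin n) ℂ :=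
    Tl.toContinuousLinearMap
  -- differentiability
  have hdiff : Differentiable ℝ (Function.uncurry u) := hu.differentiable (by simp)
  have hdx : ∀ t, Differentiable ℝ (fun s => u s t) := fun t =>
    hdiff.comp (differentiable_id.prodMk (differentiable_const t))
  have hTderiv : ∀ x t, deriv (fun s => T (u s t)) x = T (deriv (fun s => u s t) x) := by
    intro x t
    have h := ((hdx t) x).hasDerivAt
    have h2 : HasDerivAt (fun s => Tc (u s t)) (Tc (deriv (fun s => u s t) x)) x :=
      Tc.hasFDerivAt.comp_hasDerivAt x h
    exact h2.deriv
  -- key algebraic identity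
  have hab : a * b = b * a := by
    rw [ha, hb, Matrix.diagonal_mul_diagonal, Matrix.diagonal_mul_diagonal]
    refine congrArg Matrix.diagonal ?_
    funext j; ring
  have hkey : ∀ v : Matrix (Fin n) (Fin n) ℂ, a * T v - T v * a = b * v - v * b := by
    intro v
    ext j k
    by_cases h : j = k
    · subst h
      simp [ha, hb, hT, Matrix.sub_apply, Matrix.diagonal_mul, Matrix.mul_diagonal, mul_comm]
    · have hne : ((av j : ℂ) - (av k : ℂ)) ≠ 0 := by
        intro H
        apply h
        apply hav
        have : (av j : ℂ) = (av k : ℂ) := by linear_combination H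
        exact_mod_cast this
      simp only [ha, hb, hT, Matrix.sub_apply, Matrix.diagonal_mul, Matrix.mul_diagonal,
        Matrix.of_apply, if_neg h]
      push_cast
      field_simp
  have hRHS : ∀ (lam : ℂ) (v : Matrix (Fin n) (Fin n) ℂ),
      (lam • a + v) * (lam • b + T v) - (lam • b + T v) * (lam • a + v)
        = v * T v - T v * v := by
    intro lam v
    have e : (lam • a + v) * (lam • b + T v) - (lam • b + T v) * (lam • a + v)
        = lam • lam • (a * b - b * a)
          + lam • ((a * T v - T v * a) - (b * v - v * b)) + (v * T v - T v * v) := by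
      simp only [add_mul, mul_add, smul_mul_assoc, mul_smul_comm, smul_sub, smul_add]
      abel
    rw [e, hkey v, hab]
    simp
  constructor
  · intro h lam x t
    have e1 : deriv (fun s => lam • a + u x s) t = deriv (fun s => u x s) t := by
      erw [deriv_const_add]; rfl
    have e2 : deriv (fun s => lam • b + T (u s t)) x = T (deriv (fun s => u s t) x) := by
      erw [deriv_const_add]
      exact hTderiv x t
    rw [e1, e2, h x t, hRHS lam (u x t)]
    abel
  · intro h x t
    have h0 := h 0 x t
    simp only [zero_smul, zero_add] at h0
    rw [hTderiv x t, sub_eq_iff_eq_add] at h0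
    rw [h0]; abel
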